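/- The category of flat left R-modules is closed under direct limits and direct products in R-Mod if and only if R is right coherent; in particular, over a right coherent ring the flat left modules form a definable subcategory of R-Mod. -/

import Mathlib

/-!
By the equational criterion, a module is flat iff every relation `∑ i, f i • x i = 0` in it is
trivial, i.e. `x` factors through finitely many syzygies of `f`. A relation in a direct limit
already holds at some stage, where it is trivial. Over a coherent ring the syzygies of `f` are
spanned by one finite family, so the trivializations in the factors of a product can all be
routed through that family and glued coordinatewise. Conversely, if `R ^ K` is flat for the
syzygy module `K` of `f`, trivializing the tautological relation `x i = (k ↦ k i)` exhibits
finitely many generators of `K`; and an ideal is finitely presented once the syzygies of a finite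
generating family are finitely generated.
-/

open Module

def IsCoherentRing (R : Type*) [CommRing R] : Prop :=
  ∀ I : Ideal R, I.FG → FinitePresentation R I

theorem LinearMap.finitePresentation_range_iff_fg_ker {R M N : Type*} [CommRing R]
    [AddCommGroup M] [Module R M] [AddCommGroup N] [Module R N] [FinitePresentation R M]
    (l : M →ₗ[R] N) : FinitePresentation R (LinearMap.range l) ↔ (LinearMap.ker l).FG := by
  rw [← FinitePresentation.fg_ker_iff l.rangeRestrict l.surjective_rangeRestrict,
    LinearMap.ker_rangeRestrict]

section Syzygy

variable {R : Type*} [CommRing R] {ι : Type*} [Fintype ι]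

theorem mem_ker_linearCombination_iff (f : ι → R) (v : ι → R) :
    v ∈ LinearMap.ker (Fintype.linearCombination R f) ↔ ∑ i, f i * v i = 0 := by
  simp [Fintype.linearCombination_apply, mul_comm]

theorem finitePresentation_span_iff_fg_ker (f : ι → R) :
    FinitePresentation R (Ideal.span (Set.range f)) ↔
      (LinearMap.ker (Fintype.linearCombination R f)).FG := by
  rw [← LinearMap.finitePresentation_range_iff_fg_ker, Fintype.range_linearCombination]

theorem isCoherentRing_iff_fg_ker : IsCoherentRing R ↔
    ∀ (n : ℕ) (f : Fin n → R), (LinearMap.ker (Fintype.linearCombination R f)).FG := by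
  refine ⟨fun hR n f => ?_, fun h I hI => ?_⟩
  · exact (finitePresentation_span_iff_fg_ker f).mp (hR _ (Submodule.fg_span (Set.finite_range f)))
  · obtain ⟨n, f, rfl⟩ := Submodule.fg_iff_exists_fin_generating_family.mp hI
    exact (finitePresentation_span_iff_fg_ker f).mpr (h n f)

end Syzygy

namespace Module

variable {R M N : Type*} [CommRing R] [AddCommGroup M] [Module R M] [AddCommGroup N] [Module R N]
  {ι : Type*} [Fintype ι]

theorem IsTrivialRelation.map {f : ι → R} {x : ι → M} (h : IsTrivialRelation f x)
    (g : M →ₗ[R] N) : IsTrivialRelation f (g ∘ x) := by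
  obtain ⟨k, a, y, hxy, ha⟩ := h
  exact ⟨k, a, g ∘ y, fun i => by simp [hxy i, map_sum], ha⟩

theorem Flat.exists_eq_sum_smul_of_ker_le_span [Flat R M] (f : ι → R) {κ : Type*} [Fintype κ]
    (k : κ → ι → R)
    (hk : LinearMap.ker (Fintype.linearCombination R f) ≤ Submodule.span R (Set.range k))
    {x : ι → M} (hx : ∑ i, f i • x i = 0) :
    ∃ y : κ → M, ∀ i, x i = ∑ t, k t i • y t := by
  obtain ⟨n, a, z, hxz, ha⟩ := isTrivialRelation_of_sum_smul_eq_zero hx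
  have hcol (j : Fin n) : (a · j) ∈ Submodule.span R (Set.range k) :=
    hk <| (mem_ker_linearCombination_iff f _).mpr (ha j)
  choose c hc using fun j => (Submodule.mem_span_range_iff_exists_fun R).mp (hcol j)
  have ha' (i j) : a i j = ∑ t, c j t * k t i := by simpa using (congrFun (hc j) i).symm
  refine ⟨fun t => ∑ j, c j t • z j, fun i => ?_⟩
  calc x i = ∑ j, (∑ t, c j t * k t i) • z j := by simp_rw [hxz i, ha']
    _ = ∑ t, k t i • ∑ j, c j t • z j := by
        simp_rw [Finset.sum_smul, Finset.smul_sum, smul_smul, mul_comm]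
        exact Finset.sum_comm

end Module

theorem IsCoherentRing.flat_pi {R : Type*} [CommRing R] (hR : IsCoherentRing R) {ι : Type*}
    {M : ι → Type*} [∀ i, AddCommGroup (M i)] [∀ i, Module R (M i)] [∀ i, Flat R (M i)] :
    Flat R (∀ i, M i) := by
  refine Flat.of_forall_isTrivialRelation fun {l f x} hx => ?_
  obtain ⟨m, k, hk⟩ :=
    Submodule.fg_iff_exists_fin_generating_family.mp (isCoherentRing_iff_fg_ker.mp hR l f)
  choose y hy using fun p => Flat.exists_eq_sum_smul_of_ker_le_span f k hk.ge
    (x := fun i => x i p) (by simpa using congrFun hx p)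
  refine ⟨m, fun i j => k j i, fun j p => y p j, fun i => funext fun p => by simpa using hy p i,
    fun j => (mem_ker_linearCombination_iff f (k j)).mp ?_⟩
  exact hk ▸ Submodule.subset_span ⟨j, rfl⟩

namespace Module.DirectLimit

variable {R : Type*} [CommRing R] {ι : Type*} [Preorder ι] [DecidableEq ι]
  {G : ι → Type*} [∀ i, AddCommGroup (G i)] [∀ i, Module R (G i)]
  {f : ∀ i j, i ≤ j → G i →ₗ[R] G j}

theorem exists_of_finite [Nonempty ι] [IsDirectedOrder ι] {κ : Type*} [Finite κ]
    (x : κ → DirectLimit G f) : ∃ j, ∃ y : κ → G j, ∀ t, of R ι G f j (y t) = x t := by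
  choose i z hz using fun t => exists_of (x t)
  obtain ⟨j, hij⟩ := Finite.exists_le i
  exact ⟨j, fun t => f (i t) j (hij t) (z t), fun t => by rw [of_f, hz]⟩

theorem flat [Nonempty ι] [IsDirectedOrder ι] [DirectedSystem G fun i j h => f i j h]
    [∀ i, Flat R (G i)] : Flat R (DirectLimit G f) := by
  refine Flat.of_forall_isTrivialRelation fun {l r x} hx => ?_
  obtain ⟨j, y, rfl⟩ : ∃ j, ∃ y : Fin l → G j, of R ι G f j ∘ y = x := by
    simpa [funext_iff] using exists_of_finite x
  have hy : of R ι G f j (∑ i, r i • y i) = 0 := by simpa [map_sum] using hx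
  obtain ⟨k, hjk, hk⟩ := of.zero_exact hy
  have hfactor : of R ι G f j ∘ y = of R ι G f k ∘ (f j k hjk ∘ y) := by
    ext; simp
  rw [hfactor]
  exact (Flat.isTrivialRelation_of_sum_smul_eq_zero (by simpa [map_sum] using hk)).map _

end Module.DirectLimit

theorem fg_ker_linearCombination_of_flat_pi {R : Type*} [CommRing R] {ι : Type*} [Fintype ι]
    (f : ι → R) [Flat R (LinearMap.ker (Fintype.linearCombination R f) → R)] :
    (LinearMap.ker (Fintype.linearCombination R f)).FG := by
  set K := LinearMap.ker (Fintype.linearCombination R f)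
  -- the tautological solution `x i = (k ↦ k i)` of `f` in `R ^ K` is a universal one
  obtain ⟨n, a, y, hxy, ha⟩ := Flat.isTrivialRelation_of_sum_smul_eq_zero
    (f := f) (x := fun i (k : K) => (k : ι → R) i) <| funext fun k => by
      simpa using (mem_ker_linearCombination_iff f k).mp k.2
  have hK : K = Submodule.span R (Set.range fun t i => a i t) := by
    refine le_antisymm (fun k hk => ?_) ?_
    · refine (Submodule.mem_span_range_iff_exists_fun R).mpr ⟨fun t => y t ⟨k, hk⟩, ?_⟩
      funext i
      simpa [mul_comm] using (congrFun (hxy i) ⟨k, hk⟩).symm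
    · exact Submodule.span_le.mpr <| Set.range_subset_iff.mpr fun t =>
        (mem_ker_linearCombination_iff f _).mpr (ha t)
  exact hK ▸ Submodule.fg_span (Set.finite_range _)

/-- The flat left `R`-modules are closed under direct limits and direct
products in `R`-Mod if and only if `R` is (right) coherent, i.e. every finitely generated
ideal is finitely presented.  (Mathlib's `Module.Flat` requires `R` commutative, so right
coherent coincides with coherent here.) -/
theorem stmt11 (R : Type) [CommRing R] :
    ((∀ (ι : Type) (M : ι → Type) [∀ i, AddCommGroup (M i)] [∀ i, Module R (M i)],
        (∀ i, Module.Flat R (M i)) → Module.Flat R (∀ i, M i)) ∧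
      (∀ (ι : Type) [Preorder ι] [Nonempty ι] [IsDirected ι (· ≤ ·)] [DecidableEq ι]
          (G : ι → Type) [∀ i, AddCommGroup (G i)] [∀ i, Module R (G i)]
          (f : ∀ i j, i ≤ j → G i →ₗ[R] G j)
          [DirectedSystem G (fun i j hij => f i j hij)],
        (∀ i, Module.Flat R (G i)) → Module.Flat R (Module.DirectLimit G f))) ↔
      (∀ I : Ideal R, I.FG → Module.FinitePresentation R I) := by
  refine ⟨fun ⟨hpi, _⟩ => isCoherentRing_iff_fg_ker.mpr fun n f => ?_, fun hR => ⟨?_, ?_⟩⟩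
  · have := hpi _ (fun _ : LinearMap.ker (Fintype.linearCombination R f) => R) inferInstance
    exact fg_ker_linearCombination_of_flat_pi f
  · exact fun _ _ _ _ _ => IsCoherentRing.flat_pi hR
  · exact fun _ _ _ _ _ _ _ _ _ _ _ => DirectLimit.flat
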